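/- arXiv:1708.05541 — 3 statements merged into one kernel-verified Lean document; each statement's English description precedes it below -/
import Mathlib

section
/- For every positive integer h, h / gcd(h, 6) = gcd(h, 2·C(h,3) + C(h,2)), where C(n,k) denotes the binomial coefficient. (This shows that Braun's formula h/gcd(h, lcm(1,2,3)) and Douglas's formula gcd(h, 2·C(h,3) + C(h,2)) for the order c(Sp(2), h) of the torsion in twisted K-theory of Sp(2) coincide.) -/
/-!
With `N = 2·C(h,3) + C(h,2)` one has `6·N = h·(h-1)·(2h-1)`, hence
`6·gcd(h, N) = gcd(6h, h·(h-1)(2h-1)) = h·gcd(6, (h-1)(2h-1))`. A check of the residues of `h`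
modulo 6 gives `gcd(h, 6)·gcd(6, (h-1)(2h-1)) = 6`, and multiplying through by `gcd(h, 6)`
yields `gcd(h, N)·gcd(h, 6) = h`.
-/

theorem six_mul_two_mul_choose_three_add_choose_two (n : ℕ) :
    6 * (2 * (n + 1).choose 3 + (n + 1).choose 2) = (n + 1) * (n * (2 * n + 1)) := by
  induction n with
  | zero => rfl
  | succ n ih =>
    have two_mul_choose_two : 2 * (n + 1).choose 2 = (n + 1) * n := by
      rw [Nat.choose_two_right, Nat.mul_div_cancel' (Nat.even_mul_pred_self _).two_dvd]; rfl
    rw [Nat.choose_succ_succ' (n + 1) 2, Nat.choose_succ_succ' (n + 1) 1, Nat.choose_one_right]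
    nlinarith

theorem gcd_succ_six_mul_gcd_six (n : ℕ) :
    Nat.gcd (n + 1) 6 * Nat.gcd 6 (n * (2 * n + 1)) = 6 := by
  rw [Nat.gcd_comm, Nat.gcd_rec 6, Nat.gcd_rec 6, Nat.add_mod, Nat.mul_mod, Nat.add_mod (2 * n),
    Nat.mul_mod 2]
  have hr := Nat.mod_lt n (show 0 < 6 by norm_num)
  generalize n % 6 = r at hr ⊢
  interval_cases r <;> rfl

theorem Nat.gcd_mul_gcd_eq_of_mul_eq_mul {d h m N : ℕ} (hd : 0 < d) (hN : d * N = h * m)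
    (hdm : Nat.gcd h d * Nat.gcd d m = d) : Nat.gcd h N * Nat.gcd h d = h := by
  have hgcd : d * Nat.gcd h N = h * Nat.gcd d m := by
    rw [← Nat.gcd_mul_left, hN, mul_comm d h, Nat.gcd_mul_left]
  apply Nat.eq_of_mul_eq_mul_left hd
  calc d * (Nat.gcd h N * Nat.gcd h d) = h * (Nat.gcd h d * Nat.gcd d m) := by
        rw [← mul_assoc, hgcd]; ring
    _ = d * h := by rw [hdm, mul_comm]

theorem braun_douglas_Sp2_general (h : ℕ) :
    h / Nat.gcd h 6 = Nat.gcd h (2 * h.choose 3 + h.choose 2) := by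
  rcases h with _ | n
  · rfl
  · refine Nat.div_eq_of_eq_mul_left (Nat.gcd_pos_of_pos_right _ (by norm_num)) ?_
    exact (Nat.gcd_mul_gcd_eq_of_mul_eq_mul (by norm_num)
      (six_mul_two_mul_choose_three_add_choose_two n) (gcd_succ_six_mul_gcd_six n)).symm

/-- Braun's formula `h / gcd(h, 6)` and Douglas's formula
`gcd(h, 2·C(h,3) + C(h,2))` for `c(Sp(2), h)` coincide. -/
theorem braun_douglas_Sp2 (h : ℕ) (hpos : 0 < h) :
    h / Nat.gcd h 6 = Nat.gcd h (2 * h.choose 3 + h.choose 2) :=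
  braun_douglas_Sp2_general h
end

section
/- For every positive integer h, h / gcd(h, 60) = gcd(h, C(h+2,2) − 1, (h+1)(h+2)(2h+3)(3h+4)(3h+5)/120 − 1), where the displayed quotient by 120 is an exact integer division. (This shows that Braun's formula h/gcd(h,60) and Douglas's formula gcd(h, C(h+2,2) − 1, (h+1)(h+2)(2h+3)(3h+4)(3h+5)/120 − 1) for the order c(G_2, h) of the torsion in twisted K-theory of G_2 coincide.) -/
/-! Writing the product as `h * Q h + 120` with `Q = douglasQuartic`, Douglas's entries become
`h (h + 3) / 2` and `h Q(h) / 120`, so `120 * gcd(h, h (h + 3) / 2, h Q(h) / 120) = h * G` with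
`G = gcd(120, 60 (h + 3), Q h)`. Since `G` depends only on `h mod 120`, checking the 120 residues
shows `gcd(h, 60) * G = 120`, and dividing gives Braun's formula. -/

def douglasQuartic (h : ℕ) : ℕ := 18 * h ^ 4 + 135 * h ^ 3 + 400 * h ^ 2 + 585 * h + 422

theorem choose_two_add_two_sub_one (n : ℕ) : (n + 2).choose 2 - 1 = n * (n + 3) / 2 := by
  rw [Nat.choose_two_right]
  have : (n + 2) * (n + 2 - 1) = n * (n + 3) + 2 * 1 := by
    rw [show n + 2 - 1 = n + 1 by omega]; ring
  rw [this, Nat.add_mul_div_left _ _ two_pos, Nat.add_sub_cancel]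

theorem douglas_product_eq (h : ℕ) :
    (h + 1) * (h + 2) * (2 * h + 3) * (3 * h + 4) * (3 * h + 5) = h * douglasQuartic h + 120 := by
  unfold douglasQuartic; ring

theorem douglasQuartic_mod_modEq (n h : ℕ) :
    douglasQuartic (h % n) ≡ douglasQuartic h [MOD n] := by
  rw [← ZMod.natCast_eq_natCast_iff]
  simp only [douglasQuartic, Nat.cast_add, Nat.cast_mul, Nat.cast_pow, Nat.cast_ofNat, ZMod.natCast_mod]

theorem gcd_gcd_eq_of_modEq {n a b a' b' : ℕ} (ha : a ≡ a' [MOD n]) (hb : b ≡ b' [MOD n]) :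
    Nat.gcd n (Nat.gcd a b) = Nat.gcd n (Nat.gcd a' b') := by
  have gcd_congr {x y : ℕ} (hxy : x ≡ y [MOD n]) : Nat.gcd n x = Nat.gcd n y := by
    rw [Nat.gcd_comm, hxy.gcd_eq, Nat.gcd_comm]
  rw [← Nat.gcd_assoc, gcd_congr ha, Nat.gcd_assoc, Nat.gcd_left_comm, gcd_congr hb,
    Nat.gcd_left_comm]

theorem dvd_mul_douglasQuartic (h : ℕ) : 120 ∣ h * douglasQuartic h := by
  have key : ∀ r < 120, r * douglasQuartic r % 120 = 0 := by decide
  have hr := (Nat.mod_modEq h 120).mul (douglasQuartic_mod_modEq 120 h)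
  exact Nat.dvd_of_mod_eq_zero (hr ▸ key _ (Nat.mod_lt h (by norm_num)))

theorem gcd_sixty_mul_gcd_douglasQuartic (h : ℕ) :
    Nat.gcd h 60 * Nat.gcd 120 (Nat.gcd (60 * (h + 3)) (douglasQuartic h)) = 120 := by
  have key : ∀ r < 120,
      Nat.gcd r 60 * Nat.gcd 120 (Nat.gcd (60 * (r + 3)) (douglasQuartic r)) = 120 := by
    decide
  have hmod := Nat.mod_modEq h 120
  have h60 : h % 120 ≡ h [MOD 60] := Nat.ModEq.of_mul_right 2 hmod
  rw [← h60.gcd_eq,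
    ← gcd_gcd_eq_of_modEq ((hmod.add_right 3).mul_left 60) (douglasQuartic_mod_modEq 120 h)]
  exact key _ (Nat.mod_lt h (by norm_num))

theorem two_dvd_mul_add_three (n : ℕ) : 2 ∣ n * (n + 3) := by
  rcases Nat.even_or_odd n with hn | hn
  · exact (even_iff_two_dvd.mp hn).mul_right _
  · exact (even_iff_two_dvd.mp (hn.add_odd (by decide))).mul_left _

theorem mul_gcd_douglas (h : ℕ) :
    120 * Nat.gcd h (Nat.gcd (h * (h + 3) / 2) (h * douglasQuartic h / 120)) =
      h * Nat.gcd 120 (Nat.gcd (60 * (h + 3)) (douglasQuartic h)) := by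
  have hA : 120 * (h * (h + 3) / 2) = h * (60 * (h + 3)) := by
    rw [show 120 = 60 * 2 by rfl, mul_assoc, Nat.mul_div_cancel' (two_dvd_mul_add_three h)]; ring
  rw [← Nat.gcd_mul_left, ← Nat.gcd_mul_left, hA, Nat.mul_div_cancel' (dvd_mul_douglasQuartic h),
    Nat.mul_comm 120 h, Nat.gcd_mul_left, Nat.gcd_mul_left]

theorem braun_douglas_G2_general (h : ℕ) :
    h / Nat.gcd h 60 =
      Nat.gcd h (Nat.gcd ((h + 2).choose 2 - 1)
        ((h + 1) * (h + 2) * (2 * h + 3) * (3 * h + 4) * (3 * h + 5) / 120 - 1)) := by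
  rw [choose_two_add_two_sub_one, douglas_product_eq, Nat.add_div_right _ (by norm_num),
    Nat.add_sub_cancel]
  set G := Nat.gcd 120 (Nat.gcd (60 * (h + 3)) (douglasQuartic h))
  have hG : Nat.gcd h 60 * G = 120 := gcd_sixty_mul_gcd_douglasQuartic h
  have hGpos : 0 < G := Nat.pos_of_ne_zero fun h0 => by simp [h0] at hG
  refine Nat.div_eq_of_eq_mul_left (Nat.gcd_pos_of_pos_right _ (by norm_num)) ?_
  refine Nat.eq_of_mul_eq_mul_right hGpos ?_
  rw [← mul_gcd_douglas, ← hG]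
  ring

/-- Braun's formula `h / gcd(h, 60)` and Douglas's formula
`gcd(h, C(h+2,2) − 1, (h+1)(h+2)(2h+3)(3h+4)(3h+5)/120 − 1)`
for `c(G₂, h)` coincide. -/
theorem braun_douglas_G2 (h : ℕ) (hpos : 0 < h) :
    h / Nat.gcd h 60 =
      Nat.gcd h (Nat.gcd ((h + 2).choose 2 - 1)
        ((h + 1) * (h + 2) * (2 * h + 3) * (3 * h + 4) * (3 * h + 5) / 120 - 1)) :=
  braun_douglas_G2_general h
end

section
/- If h is a positive integer divisible by 4, then ν_2(h(18h^4 + 135h^3 + 400h^2 + 585h + 422)/120) = ν_2(h) − 2, where the division by 120 is exact. In particular, ν_2 of the numerator h(18h^4 + 135h^3 + 400h^2 + 585h + 422) equals ν_2(h) + 1. -/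
/-!
Modulo 4 the quartic factor is congruent to its constant term 422 ≡ 2 when `4 ∣ h`, so it
contributes exactly one factor 2 to the numerator. The numerator is divisible by `15` (a check in
`ZMod 15`) and by `8 = 4 · 2`, hence by `120`, and dividing by `120 = 2³ · 15` lowers `ν₂` by `3`.
-/

theorem padicValNat_two_eq_one_of_mod_four_eq_two {n : ℕ} (hn : n % 4 = 2) :
    padicValNat 2 n = 1 := by
  have hn0 : n ≠ 0 := by omega
  have hge : 1 ≤ padicValNat 2 n := (padicValNat_dvd_iff_le hn0).mp (by omega)
  have hlt : ¬ 2 ≤ padicValNat 2 n := fun h2 => by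
    have : 2 ^ 2 ∣ n := (padicValNat_dvd_iff_le hn0).mpr h2
    omega
  omega

theorem padicValNat_two_120 : padicValNat 2 120 = 3 := by
  rw [show (120 : ℕ) = 2 ^ 3 * 15 by norm_num, padicValNat.mul (by norm_num) (by norm_num),
    padicValNat.prime_pow, padicValNat.eq_zero_of_not_dvd (by norm_num)]

theorem quartic_mod_four_of_four_dvd {h : ℕ} (hh : 4 ∣ h) :
    (18 * h ^ 4 + 135 * h ^ 3 + 400 * h ^ 2 + 585 * h + 422) % 4 = 2 := by
  obtain ⟨k, rfl⟩ := hh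
  have : 18 * (4 * k) ^ 4 + 135 * (4 * k) ^ 3 + 400 * (4 * k) ^ 2 + 585 * (4 * k) + 422
      = 4 * (1152 * k ^ 4 + 2160 * k ^ 3 + 1600 * k ^ 2 + 585 * k + 105) + 2 := by ring
  omega

theorem fifteen_dvd_quintic (h : ℕ) :
    15 ∣ h * (18 * h ^ 4 + 135 * h ^ 3 + 400 * h ^ 2 + 585 * h + 422) := by
  have hzero : ∀ x : ZMod 15, x * (18 * x ^ 4 + 135 * x ^ 3 + 400 * x ^ 2 + 585 * x + 422) = 0 := by
    decide
  rw [← ZMod.natCast_eq_zero_iff]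
  push_cast
  exact hzero h

/-- If `4 ∣ h` with `h` positive, then
`ν_2(h(18h⁴ + 135h³ + 400h² + 585h + 422)/120) = ν_2(h) − 2`,
and `ν_2` of the numerator equals `ν_2(h) + 1`. -/
theorem val2_G2_quotient (h : ℕ) (hpos : 0 < h) (hdvd : 4 ∣ h) :
    padicValNat 2
        (h * (18 * h ^ 4 + 135 * h ^ 3 + 400 * h ^ 2 + 585 * h + 422) / 120) =
      padicValNat 2 h - 2 ∧
    padicValNat 2 (h * (18 * h ^ 4 + 135 * h ^ 3 + 400 * h ^ 2 + 585 * h + 422)) =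
      padicValNat 2 h + 1 := by
  have hmod := quartic_mod_four_of_four_dvd hdvd
  have hnum : padicValNat 2 (h * (18 * h ^ 4 + 135 * h ^ 3 + 400 * h ^ 2 + 585 * h + 422)) =
      padicValNat 2 h + 1 := by
    rw [padicValNat.mul hpos.ne' (by omega), padicValNat_two_eq_one_of_mod_four_eq_two hmod]
  have h8 : 4 * 2 ∣ h * (18 * h ^ 4 + 135 * h ^ 3 + 400 * h ^ 2 + 585 * h + 422) :=
    mul_dvd_mul hdvd (by omega)
  have h120dvd : 120 ∣ h * (18 * h ^ 4 + 135 * h ^ 3 + 400 * h ^ 2 + 585 * h + 422) :=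
    Nat.Coprime.mul_dvd_of_dvd_of_dvd (by norm_num) h8 (fifteen_dvd_quintic h)
  refine ⟨?_, hnum⟩
  rw [padicValNat.div_of_dvd h120dvd, hnum, padicValNat_two_120]
  omega
end
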